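/- arXiv:2512.14007 — 8 statements merged into one kernel-verified Lean document; each statement's English description precedes it below -/
import Mathlib

section
/- Let (a,b) be a perplex parameter. Then the element 𝟙 := (1/(a₁b₂ − a₂b₁))·(b₂, −b₁) is a multiplicative identity for the product *: for every x ∈ ℝ², 𝟙 * x = x and x * 𝟙 = x. -/
/-!
Up to the factor `1 / (a₁b₂ − a₂b₁)`, the product `𝟙 * x` is
`((a₁b₂ − a₂b₁) x₁ + (a₂b₂ − a₃b₁) x₂, (b₂² − b₁b₃) x₂)`. Condition (iii) kills the second term of the
first coordinate, and conditions (i), (iii), (iv) force `a₁b₂ − a₂b₁ = b₂² − b₁b₃`, so `𝟙` is a left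
identity; it is a right identity because `*` is commutative.
-/

open Filter Topology

noncomputable section

/-- The perplex product on `ℝ²` determined by the parameters `a = (a₁,a₂,a₃)`,
`b = (b₁,b₂,b₃)`. -/
def pmul (a₁ a₂ a₃ b₁ b₂ b₃ : ℝ) (x y : ℝ × ℝ) : ℝ × ℝ :=
  (a₁ * x.1 * y.1 + a₂ * (x.1 * y.2 + x.2 * y.1) + a₃ * x.2 * y.2,
   b₁ * x.1 * y.1 + b₂ * (x.1 * y.2 + x.2 * y.1) + b₃ * x.2 * y.2)

/-- `(a,b)` is a perplex parameter: conditions (i)-(iv). -/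
def IsPerplexParam (a₁ a₂ a₃ b₁ b₂ b₃ : ℝ) : Prop :=
  a₁ * a₃ - a₂ ^ 2 ≠ 0 ∧ a₁ * b₂ - a₂ * b₁ ≠ 0 ∧
    a₂ * b₂ - a₃ * b₁ = 0 ∧ a₁ * a₃ - a₂ ^ 2 + a₂ * b₃ - a₃ * b₂ = 0

/-- The multiplicative identity `𝟙` of the perplex algebra. -/
def pone (a₁ a₂ b₁ b₂ : ℝ) : ℝ × ℝ :=
  (1 / (a₁ * b₂ - a₂ * b₁)) • ((b₂, -b₁) : ℝ × ℝ)

theorem pmul_comm (a₁ a₂ a₃ b₁ b₂ b₃ : ℝ) (x y : ℝ × ℝ) :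
    pmul a₁ a₂ a₃ b₁ b₂ b₃ x y = pmul a₁ a₂ a₃ b₁ b₂ b₃ y x := by
  simp only [pmul, Prod.mk.injEq]
  constructor <;> ring

/-- Multiplying `a₁b₂ − a₂b₁ − (b₂² − b₁b₃)` by `a₃` resp. `a₂` gives a combination of (iii) and (iv),
hence so does multiplying it by `a₁ a₃ − a₂²`, which is nonzero by (i). -/
theorem IsPerplexParam.det_eq {a₁ a₂ a₃ b₁ b₂ b₃ : ℝ} (hp : IsPerplexParam a₁ a₂ a₃ b₁ b₂ b₃) :
    a₁ * b₂ - a₂ * b₁ = b₂ ^ 2 - b₁ * b₃ := by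
  obtain ⟨hdisc, -, h3, h4⟩ := hp
  refine sub_eq_zero.mp (mul_left_cancel₀ hdisc ?_)
  linear_combination (a₁ * b₂ - a₂ * b₁) * h4 + (a₂ * b₂ - a₁ * b₃) * h3

theorem pone_pmul {a₁ a₂ a₃ b₁ b₂ b₃ : ℝ} (hD : a₁ * b₂ - a₂ * b₁ ≠ 0)
    (h3 : a₂ * b₂ - a₃ * b₁ = 0) (hdet : a₁ * b₂ - a₂ * b₁ = b₂ ^ 2 - b₁ * b₃) (x : ℝ × ℝ) :
    pmul a₁ a₂ a₃ b₁ b₂ b₃ (pone a₁ a₂ b₁ b₂) x = x := by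
  simp only [pmul, pone, Prod.smul_mk, smul_eq_mul, Prod.ext_iff]
  constructor <;> field_simp
  · linear_combination x.2 * h3
  · rw [div_eq_iff (by rwa [mul_comm b₁])]
    linear_combination -x.2 * hdet

/-- For a perplex parameter, `𝟙 = (1/(a₁b₂ − a₂b₁))·(b₂, −b₁)` is a two-sided
multiplicative identity for `*`. -/
theorem pone_is_identity (a₁ a₂ a₃ b₁ b₂ b₃ : ℝ)
    (hp : IsPerplexParam a₁ a₂ a₃ b₁ b₂ b₃) :
    ∀ x : ℝ × ℝ, pmul a₁ a₂ a₃ b₁ b₂ b₃ (pone a₁ a₂ b₁ b₂) x = x ∧ pmul a₁ a₂ a₃ b₁ b₂ b₃ x (pone a₁ a₂ b₁ b₂) = x := by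
  intro x
  have hleft := pone_pmul hp.2.1 hp.2.2.1 hp.det_eq x
  exact ⟨hleft, (pmul_comm _ _ _ _ _ _ _ _).trans hleft⟩
end
end

section
/- Let (a,b) be a perplex parameter with identity 𝟙 = (1/(a₁b₂ − a₂b₁))·(b₂, −b₁). An element x = (x₁,x₂) ∈ ℝ² is NOT invertible for * (i.e., there is no y with x*y = 𝟙) if and only if x₁²(a₁b₂ − a₂b₁) + x₁x₂(a₁b₃ − a₃b₁) + x₂²(a₂b₃ − a₃b₂) = 0. -/
open Filter Topology

noncomputable section

/-! The quadratic form in the statement is the determinant of the multiplication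
map `y ↦ x * y`. When it is nonzero, Cramer's rule solves `x * y = 𝟙`. Conversely, the perplex
conditions make `*` associative with unit `𝟙`, so `x * y = 𝟙` makes the matrices of
multiplication by `x` and by `y` inverse to each other, and the determinant cannot vanish. -/

section

variable (a₁ a₂ a₃ b₁ b₂ b₃ : ℝ)

/-- The matrix of `y ↦ x * y`. -/
def pmulMatrix (x : ℝ × ℝ) : Matrix (Fin 2) (Fin 2) ℝ :=
  !![a₁ * x.1 + a₂ * x.2, a₂ * x.1 + a₃ * x.2; b₁ * x.1 + b₂ * x.2, b₂ * x.1 + b₃ * x.2]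

theorem det_pmulMatrix (x : ℝ × ℝ) :
    (pmulMatrix a₁ a₂ a₃ b₁ b₂ b₃ x).det =
      x.1 ^ 2 * (a₁ * b₂ - a₂ * b₁) + x.1 * x.2 * (a₁ * b₃ - a₃ * b₁) +
        x.2 ^ 2 * (a₂ * b₃ - a₃ * b₂) := by
  rw [pmulMatrix, Matrix.det_fin_two_of]
  ring

theorem exists_pmul_eq_of_det_ne_zero {x : ℝ × ℝ}
    (hx : (pmulMatrix a₁ a₂ a₃ b₁ b₂ b₃ x).det ≠ 0) (t : ℝ × ℝ) :
    ∃ y, pmul a₁ a₂ a₃ b₁ b₂ b₃ x y = t := by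
  set d := (pmulMatrix a₁ a₂ a₃ b₁ b₂ b₃ x).det with hd
  rw [det_pmulMatrix] at hd
  -- Cramer's rule: `y = d⁻¹ • adj (pmulMatrix x) *ᵥ t`.
  refine ⟨(((b₂ * x.1 + b₃ * x.2) * t.1 - (a₂ * x.1 + a₃ * x.2) * t.2) / d,
    ((a₁ * x.1 + a₂ * x.2) * t.2 - (b₁ * x.1 + b₂ * x.2) * t.1) / d), ?_⟩
  ext <;> simp only [pmul] <;> field_simp <;> rw [hd] <;> ring

end

namespace IsPerplexParam

variable {a₁ a₂ a₃ b₁ b₂ b₃ : ℝ} (hp : IsPerplexParam a₁ a₂ a₃ b₁ b₂ b₃)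
include hp

theorem sq_sub_mul_eq : b₂ ^ 2 - b₁ * b₃ = a₁ * b₂ - a₂ * b₁ := by
  obtain ⟨hA, -, h₃, h₄⟩ := hp
  rcases eq_or_ne a₂ 0 with rfl | ha₂
  · have ha₃ : a₃ ≠ 0 := by rintro rfl; simp at hA
    have hb₁ : b₁ = 0 := by simpa [ha₃] using h₃
    have hb₂ : b₂ = a₁ := by
      have : a₃ * (a₁ - b₂) = 0 := by linear_combination h₄
      linarith [(mul_eq_zero.mp this).resolve_left ha₃]
    subst hb₁ hb₂
    ring
  · refine mul_left_cancel₀ ha₂ ?_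
    linear_combination (b₂ - a₁) * h₃ - b₁ * h₄

/-- Associativity of `*`, read column by column. -/
theorem pmulMatrix_pmul (x y : ℝ × ℝ) :
    pmulMatrix a₁ a₂ a₃ b₁ b₂ b₃ (pmul a₁ a₂ a₃ b₁ b₂ b₃ x y) =
      pmulMatrix a₁ a₂ a₃ b₁ b₂ b₃ x * pmulMatrix a₁ a₂ a₃ b₁ b₂ b₃ y := by
  have hK := hp.sq_sub_mul_eq
  obtain ⟨-, -, h₃, h₄⟩ := hp
  ext i j
  fin_cases i <;> fin_cases j <;> simp only [pmulMatrix, pmul,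
    Matrix.mul_apply, Fin.sum_univ_two, Fin.isValue, Fin.zero_eta, Fin.mk_one, Matrix.of_apply,
    Matrix.cons_val', Matrix.cons_val_zero, Matrix.cons_val_one, Matrix.cons_val_fin_one]
  · linear_combination y.1 * x.2 * h₃ + y.2 * x.2 * h₄
  · linear_combination -(y.1 * x.1 * h₃) - y.2 * x.1 * h₄
  · linear_combination -(y.2 * x.2 * h₃) + y.1 * x.2 * hK
  · linear_combination y.2 * x.1 * h₃ - y.1 * x.1 * hK

theorem pmulMatrix_pone : pmulMatrix a₁ a₂ a₃ b₁ b₂ b₃ (pone a₁ a₂ b₁ b₂) = 1 := by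
  have hK := hp.sq_sub_mul_eq
  obtain ⟨-, hD, h₃, -⟩ := hp
  ext i j
  have hD' := mul_inv_cancel₀ hD
  fin_cases i <;> fin_cases j <;> simp only [pmulMatrix, pone, one_div,
    Prod.smul_mk, smul_eq_mul, mul_neg, Fin.isValue, Fin.zero_eta, Fin.mk_one, Matrix.of_apply,
    Matrix.cons_val', Matrix.cons_val_zero, Matrix.cons_val_one, Matrix.cons_val_fin_one,
    Matrix.one_apply_eq, Matrix.one_apply_ne, ne_eq, zero_ne_one, one_ne_zero, not_false_eq_true]
  · linear_combination hD'
  · linear_combination (a₁ * b₂ - a₂ * b₁)⁻¹ * h₃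
  · ring
  · linear_combination (a₁ * b₂ - a₂ * b₁)⁻¹ * hK + hD'

theorem exists_pmul_eq_pone_iff (x : ℝ × ℝ) :
    (∃ y, pmul a₁ a₂ a₃ b₁ b₂ b₃ x y = pone a₁ a₂ b₁ b₂) ↔
      (pmulMatrix a₁ a₂ a₃ b₁ b₂ b₃ x).det ≠ 0 := by
  refine ⟨fun ⟨y, hy⟩ hdet => ?_, fun hdet => exists_pmul_eq_of_det_ne_zero _ _ _ _ _ _ hdet _⟩
  have h := congrArg Matrix.det (hp.pmulMatrix_pmul x y)
  rw [hy, hp.pmulMatrix_pone, Matrix.det_one, Matrix.det_mul, hdet, zero_mul] at h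
  exact one_ne_zero h

end IsPerplexParam

/-- An element `x` is not invertible for `*` iff the displayed conic form
vanishes at `x`. -/
theorem not_invertible_iff (a₁ a₂ a₃ b₁ b₂ b₃ : ℝ)
    (hp : IsPerplexParam a₁ a₂ a₃ b₁ b₂ b₃) (x : ℝ × ℝ) :
    (¬ ∃ y : ℝ × ℝ, pmul a₁ a₂ a₃ b₁ b₂ b₃ x y = pone a₁ a₂ b₁ b₂) ↔
      x.1 ^ 2 * (a₁ * b₂ - a₂ * b₁) + x.1 * x.2 * (a₁ * b₃ - a₃ * b₁) +
        x.2 ^ 2 * (a₂ * b₃ - a₃ * b₂) = 0 := by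
  rw [hp.exists_pmul_eq_pone_iff, det_pmulMatrix, not_not]
end
end

section
/- Let (a,b) be a perplex parameter. The perplex algebra ℙ_{a,b} has no nonzero nilpotent elements (i.e., there is no x ≠ 0 and n ≥ 1 with the n-fold *-power x^n = 0) if and only if Δ ≠ 0, where Δ := (a₁b₃ − a₃b₁)² − 4(a₁b₂ − a₂b₁)(a₂b₃ − a₃b₂). -/
open Filter Topology

noncomputable section

/-- `n`-fold `*`-power of `x`, with `x ^ 0 := 𝟙`. -/
def ppow (a₁ a₂ a₃ b₁ b₂ b₃ : ℝ) (x : ℝ × ℝ) : ℕ → ℝ × ℝ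
  | 0 => pone a₁ a₂ b₁ b₂
  | n + 1 => pmul a₁ a₂ a₃ b₁ b₂ b₃ x (ppow a₁ a₂ a₃ b₁ b₂ b₃ x n)

namespace PerplexAux

variable {a₁ a₂ a₃ b₁ b₂ b₃ : ℝ}

lemma pmul_comm (x y : ℝ × ℝ) :
    pmul a₁ a₂ a₃ b₁ b₂ b₃ x y = pmul a₁ a₂ a₃ b₁ b₂ b₃ y x := by
  simp only [pmul, Prod.mk.injEq]
  constructor <;> ring

lemma pmul_zero (x : ℝ × ℝ) : pmul a₁ a₂ a₃ b₁ b₂ b₃ x 0 = 0 := by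
  simp [pmul, Prod.ext_iff]

lemma zero_pmul (x : ℝ × ℝ) : pmul a₁ a₂ a₃ b₁ b₂ b₃ 0 x = 0 := by
  simp [pmul, Prod.ext_iff]

/-- Key auxiliary identity: `b₂² - b₁ b₃ = a₁ b₂ - a₂ b₁`. -/
lemma unit_norm (hp : IsPerplexParam a₁ a₂ a₃ b₁ b₂ b₃) :
    b₂ ^ 2 - b₁ * b₃ = a₁ * b₂ - a₂ * b₁ := by
  obtain ⟨h1, h2, h3, h4⟩ := hp
  by_cases ha2 : a₂ = 0
  · have h30 : a₃ * b₁ = 0 := by linear_combination (-1 : ℝ) * h3 + b₂ * ha2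
    have ha13 : a₁ * a₃ ≠ 0 := fun h => h1 (by rw [h, ha2]; ring)
    have ha3 : a₃ ≠ 0 := fun h => ha13 (by rw [h]; ring)
    have hb1 : b₁ = 0 := (mul_eq_zero.mp h30).resolve_left ha3
    have h40 : a₃ * (a₁ - b₂) = 0 := by linear_combination h4 + (a₂ - b₃) * ha2
    have hb2 : b₂ = a₁ := by
      have := (mul_eq_zero.mp h40).resolve_left ha3
      linarith
    rw [ha2, hb1, hb2]; ring
  · refine mul_left_cancel₀ ha2 ?_
    linear_combination (b₂ - a₁) * h3 + (-b₁) * h4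

lemma pmul_smul (c : ℝ) (x y : ℝ × ℝ) :
    pmul a₁ a₂ a₃ b₁ b₂ b₃ x (c • y) = c • pmul a₁ a₂ a₃ b₁ b₂ b₃ x y := by
  simp only [pmul, Prod.smul_fst, Prod.smul_snd, smul_eq_mul, Prod.smul_mk, Prod.mk.injEq]
  constructor <;> ring

lemma pmul_unit_vec (h3 : a₂ * b₂ - a₃ * b₁ = 0)
    (hT : b₂ ^ 2 - b₁ * b₃ = a₁ * b₂ - a₂ * b₁) (x : ℝ × ℝ) :
    pmul a₁ a₂ a₃ b₁ b₂ b₃ x (b₂, -b₁) = (a₁ * b₂ - a₂ * b₁) • x := by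
  simp only [pmul, Prod.ext_iff, Prod.smul_fst, Prod.smul_snd, smul_eq_mul]
  constructor
  · linear_combination x.2 * h3
  · linear_combination x.2 * hT

lemma pmul_pone (hp : IsPerplexParam a₁ a₂ a₃ b₁ b₂ b₃) (x : ℝ × ℝ) :
    pmul a₁ a₂ a₃ b₁ b₂ b₃ x (pone a₁ a₂ b₁ b₂) = x := by
  have hT := unit_norm hp
  rw [pone, pmul_smul, pmul_unit_vec hp.2.2.1 hT, smul_smul,
    one_div_mul_cancel hp.2.1, one_smul]

lemma pmul_assoc (hp : IsPerplexParam a₁ a₂ a₃ b₁ b₂ b₃) (x y z : ℝ × ℝ) :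
    pmul a₁ a₂ a₃ b₁ b₂ b₃ (pmul a₁ a₂ a₃ b₁ b₂ b₃ x y) z =
      pmul a₁ a₂ a₃ b₁ b₂ b₃ x (pmul a₁ a₂ a₃ b₁ b₂ b₃ y z) := by
  obtain ⟨h1, h2, h3, h4⟩ := hp
  simp only [pmul, Prod.mk.injEq]
  constructor
  · linear_combination (x.2 * y.1 * z.1 - x.1 * y.1 * z.2) * h3 +
      (x.2 * y.2 * z.1 - x.1 * y.2 * z.2) * h4
  · by_cases ha2 : a₂ = 0
    · have h30 : a₃ * b₁ = 0 := by linear_combination (-1 : ℝ) * h3 + b₂ * ha2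
      have ha13 : a₁ * a₃ ≠ 0 := fun h => h1 (by rw [h, ha2]; ring)
      have ha3 : a₃ ≠ 0 := fun h => ha13 (by rw [h]; ring)
      have hb1 : b₁ = 0 := (mul_eq_zero.mp h30).resolve_left ha3
      have h40 : a₃ * (a₁ - b₂) = 0 := by linear_combination h4 + (a₂ - b₃) * ha2
      have hb2 : b₂ = a₁ := by
        have := (mul_eq_zero.mp h40).resolve_left ha3
        linarith
      rw [ha2, hb1, hb2]; ring
    · refine mul_left_cancel₀ ha2 ?_
      linear_combination
        (a₁ * (x.1 * y.1 * z.2 - x.2 * y.1 * z.1) + a₂ * (x.1 * y.2 * z.2 - x.2 * y.2 * z.1)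
          - b₂ * (x.1 * y.1 * z.2 - x.2 * y.1 * z.1)) * h3 +
        (b₁ * (x.1 * y.1 * z.2 - x.2 * y.1 * z.1)) * h4

lemma ppow_one (hp : IsPerplexParam a₁ a₂ a₃ b₁ b₂ b₃) (x : ℝ × ℝ) :
    ppow a₁ a₂ a₃ b₁ b₂ b₃ x 1 = x := by
  show pmul a₁ a₂ a₃ b₁ b₂ b₃ x (pone a₁ a₂ b₁ b₂) = x
  exact pmul_pone hp x

lemma ppow_add (hp : IsPerplexParam a₁ a₂ a₃ b₁ b₂ b₃) (x : ℝ × ℝ) (m n : ℕ) :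
    ppow a₁ a₂ a₃ b₁ b₂ b₃ x (m + n) =
      pmul a₁ a₂ a₃ b₁ b₂ b₃ (ppow a₁ a₂ a₃ b₁ b₂ b₃ x m) (ppow a₁ a₂ a₃ b₁ b₂ b₃ x n) := by
  induction n with
  | zero => exact (pmul_pone hp _).symm
  | succ n ih =>
    calc ppow a₁ a₂ a₃ b₁ b₂ b₃ x (m + (n + 1))
        = pmul a₁ a₂ a₃ b₁ b₂ b₃ x (ppow a₁ a₂ a₃ b₁ b₂ b₃ x (m + n)) := rfl
      _ = pmul a₁ a₂ a₃ b₁ b₂ b₃ x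
            (pmul a₁ a₂ a₃ b₁ b₂ b₃ (ppow a₁ a₂ a₃ b₁ b₂ b₃ x m)
              (ppow a₁ a₂ a₃ b₁ b₂ b₃ x n)) := by rw [ih]
      _ = pmul a₁ a₂ a₃ b₁ b₂ b₃
            (pmul a₁ a₂ a₃ b₁ b₂ b₃ x (ppow a₁ a₂ a₃ b₁ b₂ b₃ x m))
            (ppow a₁ a₂ a₃ b₁ b₂ b₃ x n) := (pmul_assoc hp _ _ _).symm
      _ = pmul a₁ a₂ a₃ b₁ b₂ b₃
            (pmul a₁ a₂ a₃ b₁ b₂ b₃ (ppow a₁ a₂ a₃ b₁ b₂ b₃ x m) x)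
            (ppow a₁ a₂ a₃ b₁ b₂ b₃ x n) := by rw [pmul_comm x]
      _ = pmul a₁ a₂ a₃ b₁ b₂ b₃ (ppow a₁ a₂ a₃ b₁ b₂ b₃ x m)
            (pmul a₁ a₂ a₃ b₁ b₂ b₃ x (ppow a₁ a₂ a₃ b₁ b₂ b₃ x n)) := pmul_assoc hp _ _ _
      _ = pmul a₁ a₂ a₃ b₁ b₂ b₃ (ppow a₁ a₂ a₃ b₁ b₂ b₃ x m)
            (ppow a₁ a₂ a₃ b₁ b₂ b₃ x (n + 1)) := rfl

/-- If a nonzero `y` squares to zero, the discriminant vanishes. -/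
lemma delta_eq_zero (h2 : a₁ * b₂ - a₂ * b₁ ≠ 0) (y : ℝ × ℝ) (hy : y ≠ 0)
    (h0 : pmul a₁ a₂ a₃ b₁ b₂ b₃ y y = 0) :
    (a₁ * b₃ - a₃ * b₁) ^ 2 - 4 * (a₁ * b₂ - a₂ * b₁) * (a₂ * b₃ - a₃ * b₂) = 0 := by
  have e1 : a₁ * y.1 ^ 2 + 2 * a₂ * y.1 * y.2 + a₃ * y.2 ^ 2 = 0 := by
    have h := congrArg Prod.fst h0
    simp only [pmul, Prod.fst_zero] at h
    linear_combination h
  have e2 : b₁ * y.1 ^ 2 + 2 * b₂ * y.1 * y.2 + b₃ * y.2 ^ 2 = 0 := by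
    have h := congrArg Prod.snd h0
    simp only [pmul, Prod.snd_zero] at h
    linear_combination h
  by_cases hy2 : y.2 = 0
  · have hy1 : y.1 ≠ 0 := by
      intro h
      exact hy (Prod.ext h hy2)
    have ha1 : a₁ = 0 := by
      have h : a₁ * y.1 ^ 2 = 0 := by
        linear_combination e1 - (2 * a₂ * y.1 + a₃ * y.2) * hy2
      exact (mul_eq_zero.mp h).resolve_right (pow_ne_zero 2 hy1)
    have hb1 : b₁ = 0 := by
      have h : b₁ * y.1 ^ 2 = 0 := by
        linear_combination e2 - (2 * b₂ * y.1 + b₃ * y.2) * hy2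
      exact (mul_eq_zero.mp h).resolve_right (pow_ne_zero 2 hy1)
    exact absurd (by rw [ha1, hb1]; ring) h2
  · have key : ((a₁ * b₃ - a₃ * b₁) ^ 2 -
        4 * (a₁ * b₂ - a₂ * b₁) * (a₂ * b₃ - a₃ * b₂)) * y.2 ^ 3 = 0 := by
      linear_combination
        (2 * a₁ * b₁ * b₂ * y.1 - a₁ * b₁ * b₃ * y.2 + 4 * a₁ * b₂ ^ 2 * y.2
          - 2 * a₂ * b₁ ^ 2 * y.1 - 4 * a₂ * b₁ * b₂ * y.2 + a₃ * b₁ ^ 2 * y.2) * e1 +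
        (-2 * a₁ ^ 2 * b₂ * y.1 + a₁ ^ 2 * b₃ * y.2 + 2 * a₁ * a₂ * b₁ * y.1
          - 4 * a₁ * a₂ * b₂ * y.2 - a₁ * a₃ * b₁ * y.2 + 4 * a₂ ^ 2 * b₁ * y.2) * e2
    exact (mul_eq_zero.mp key).resolve_right (pow_ne_zero 3 hy2)

end PerplexAux

open PerplexAux

/-- Proposition 1.4: `ℙ_{a,b}` has no nonzero nilpotent element iff `Δ ≠ 0`. -/
theorem no_nilpotent_iff_discriminant_ne_zero (a₁ a₂ a₃ b₁ b₂ b₃ : ℝ)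
    (hp : IsPerplexParam a₁ a₂ a₃ b₁ b₂ b₃) :
    (¬ ∃ x : ℝ × ℝ, x ≠ 0 ∧ ∃ n : ℕ, 1 ≤ n ∧ ppow a₁ a₂ a₃ b₁ b₂ b₃ x n = 0) ↔
      (a₁ * b₃ - a₃ * b₁) ^ 2 -
        4 * (a₁ * b₂ - a₂ * b₁) * (a₂ * b₃ - a₃ * b₂) ≠ 0 := by
  constructor
  · -- no nilpotents → Δ ≠ 0
    intro hno hΔ
    apply hno
    refine ⟨(-(a₁ * b₃ - a₃ * b₁), 2 * (a₁ * b₂ - a₂ * b₁)), ?_, 2, one_le_two, ?_⟩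
    · intro h
      have h2' : (2 : ℝ) * (a₁ * b₂ - a₂ * b₁) = 0 := congrArg Prod.snd h
      exact hp.2.1 (by linarith)
    · show pmul a₁ a₂ a₃ b₁ b₂ b₃ _
        (pmul a₁ a₂ a₃ b₁ b₂ b₃ _ (pone a₁ a₂ b₁ b₂)) = 0
      rw [pmul_pone hp]
      refine Prod.ext ?_ ?_
      · show a₁ * _ * _ + a₂ * _ + a₃ * _ * _ = (0 : ℝ × ℝ).1
        simp only [Prod.fst_zero]
        linear_combination a₁ * hΔ
      · show b₁ * _ * _ + b₂ * _ + b₃ * _ * _ = (0 : ℝ × ℝ).2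
        simp only [Prod.snd_zero]
        linear_combination b₁ * hΔ
  · -- Δ ≠ 0 → no nilpotents
    intro hΔ h
    obtain ⟨x, hx, n, hn, hxn⟩ := h
    classical
    have hex : ∃ k, ppow a₁ a₂ a₃ b₁ b₂ b₃ x k = 0 := ⟨n, hxn⟩
    set m := Nat.find hex with hmdef
    have hm : ppow a₁ a₂ a₃ b₁ b₂ b₃ x m = 0 := Nat.find_spec hex
    have hmin : ∀ k < m, ppow a₁ a₂ a₃ b₁ b₂ b₃ x k ≠ 0 := fun k hk => Nat.find_min hex hk
    have h0ne : ppow a₁ a₂ a₃ b₁ b₂ b₃ x 0 ≠ 0 := by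
      intro h0
      apply hx
      have e : ppow a₁ a₂ a₃ b₁ b₂ b₃ x 1 =
          pmul a₁ a₂ a₃ b₁ b₂ b₃ x (ppow a₁ a₂ a₃ b₁ b₂ b₃ x 0) := rfl
      rw [h0, pmul_zero, ppow_one hp] at e
      exact e
    have h1ne : ppow a₁ a₂ a₃ b₁ b₂ b₃ x 1 ≠ 0 := by
      rw [ppow_one hp]; exact hx
    have hm0 : m ≠ 0 := fun h => h0ne (h ▸ hm)
    have hm1 : m ≠ 1 := fun h => h1ne (h ▸ hm)
    have h2m : 2 ≤ m := by omega
    obtain ⟨k, hk⟩ : ∃ k, m = k + 2 := ⟨m - 2, by omega⟩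
    set y := ppow a₁ a₂ a₃ b₁ b₂ b₃ x (k + 1) with hydef
    have hy : y ≠ 0 := hmin (k + 1) (by omega)
    have hyy : pmul a₁ a₂ a₃ b₁ b₂ b₃ y y = 0 := by
      calc pmul a₁ a₂ a₃ b₁ b₂ b₃ y y
          = ppow a₁ a₂ a₃ b₁ b₂ b₃ x ((k + 1) + (k + 1)) := (ppow_add hp x _ _).symm
        _ = ppow a₁ a₂ a₃ b₁ b₂ b₃ x ((k + 2) + k) := by ring_nf
        _ = pmul a₁ a₂ a₃ b₁ b₂ b₃ (ppow a₁ a₂ a₃ b₁ b₂ b₃ x (k + 2))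
              (ppow a₁ a₂ a₃ b₁ b₂ b₃ x k) := ppow_add hp x _ _
        _ = pmul a₁ a₂ a₃ b₁ b₂ b₃ 0 (ppow a₁ a₂ a₃ b₁ b₂ b₃ x k) := by rw [← hk, hm]
        _ = 0 := zero_pmul _
    exact hΔ (delta_eq_zero hp.2.1 y hy hyy)
end
end

section
/- Let (a,b) be a perplex parameter and suppose Δ < 0, where Δ := (a₁b₃ − a₃b₁)² − 4(a₁b₂ − a₂b₁)(a₂b₃ − a₃b₂). Then ℙ_{a,b} is isomorphic to the complex numbers: there exists a real-linear equivalence φ : ℝ² → ℂ such that φ(x * y) = φ(x)·φ(y) for all x, y ∈ ℝ². -/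
open Filter Topology

noncomputable section

/-! The isomorphism is `x ↦ (a₁ + b₁ t) (x₁ + x₂ t)`, where `t`, which plays the role of
`φ e₂ / φ e₁`, is a root of `(a₁b₂ − a₂b₁) t² − (a₁b₃ − a₃b₁) t + (a₂b₃ − a₃b₂)`. This quadratic
has discriminant `Δ < 0`, so `t ∉ ℝ` and `1, t` is a real basis of `ℂ`. -/

/-- With `e₁, e₂` the standard basis, this is the second coordinate of
`(e₁ * e₁) * e₂ = e₁ * (e₁ * e₂)`; (iii) and (iv) are the other components of associativity. -/
theorem IsPerplexParam.assoc_identity {a₁ a₂ a₃ b₁ b₂ b₃ : ℝ}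
    (hp : IsPerplexParam a₁ a₂ a₃ b₁ b₂ b₃) :
    a₁ * b₂ - a₂ * b₁ + b₁ * b₃ - b₂ ^ 2 = 0 := by
  obtain ⟨hi, -, hiii, hiv⟩ := hp
  rcases eq_or_ne a₂ 0 with rfl | ha₂
  · have ha₃ : a₃ ≠ 0 := by rintro rfl; simp at hi
    have hb₁ : b₁ = 0 := by
      simpa [ha₃] using hiii
    have hb₂ : b₂ = a₁ := by
      have : a₃ * (a₁ - b₂) = 0 := by linear_combination hiv
      linarith [(mul_eq_zero.mp this).resolve_left ha₃]
    rw [hb₁, hb₂]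
    ring
  · refine (mul_eq_zero.mp ?_).resolve_left ha₂
    linear_combination (a₁ - b₂) * hiii + b₁ * hiv

theorem mul_root_eq_of_quadratic_eq_zero {K : Type*} [Field K] {a₁ a₂ a₃ b₁ b₂ b₃ t : K}
    (hA : a₁ * b₂ - a₂ * b₁ ≠ 0) (hiii : a₂ * b₂ - a₃ * b₁ = 0)
    (hiv : a₁ * a₃ - a₂ ^ 2 + a₂ * b₃ - a₃ * b₂ = 0)
    (hK : a₁ * b₂ - a₂ * b₁ + b₁ * b₃ - b₂ ^ 2 = 0)
    (ht : (a₁ * b₂ - a₂ * b₁) * t ^ 2 - (a₁ * b₃ - a₃ * b₁) * t + (a₂ * b₃ - a₃ * b₂) = 0) :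
    (a₁ + b₁ * t) * t = a₂ + b₂ * t ∧ (a₁ + b₁ * t) * t ^ 2 = a₃ + b₃ * t := by
  have h₁ : (a₁ + b₁ * t) * t = a₂ + b₂ * t := by
    refine mul_left_cancel₀ hA ?_
    linear_combination b₁ * ht + (a₁ * t - a₂) * hK + (b₁ * t - b₂) * hiii
  refine ⟨h₁, ?_⟩
  refine mul_left_cancel₀ hA ?_
  linear_combination b₂ * ht + (a₂ * t) * hK + (b₂ * t - a₂) * hiii - b₂ * hiv
    + ((a₁ * b₂ - a₂ * b₁) * t) * h₁

theorem Complex.exists_im_ne_zero_quadratic_eq_zero {a b c : ℝ} (h : discrim a b c < 0) :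
    ∃ t : ℂ, t.im ≠ 0 ∧ (a : ℂ) * (t * t) + b * t + c = 0 := by
  have ha : a ≠ 0 := by
    rintro rfl
    exact h.not_ge (by simpa [discrim] using sq_nonneg b)
  obtain ⟨s, hs⟩ := IsAlgClosed.exists_eq_mul_self (discrim (a : ℂ) b c)
  obtain ⟨t, ht⟩ := exists_quadratic_eq_zero (by exact_mod_cast ha) ⟨s, hs⟩
  refine ⟨t, fun him => ?_, ht⟩
  have hreal : a * (t.re * t.re) + b * t.re + c = 0 := by
    rw [← Complex.re_add_im t, him] at ht
    simp only [Complex.ofReal_zero, zero_mul, add_zero] at ht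
    exact_mod_cast ht
  exact h.not_ge (discrim_eq_sq_of_quadratic_eq_zero hreal ▸ sq_nonneg _)

theorem Complex.eq_zero_of_ofReal_add_ofReal_mul_eq_zero {t : ℂ} (ht : t.im ≠ 0) {u v : ℝ}
    (h : (u : ℂ) + v * t = 0) : u = 0 ∧ v = 0 := by
  have hv : v = 0 := by
    simpa [ht] using congrArg Complex.im h
  subst hv
  simpa using h

def Complex.ofRealPairWith (t : ℂ) : ℝ × ℝ →ₗ[ℝ] ℂ :=
  (Algebra.linearMap ℝ ℂ).coprod (LinearMap.toSpanSingleton ℝ ℂ t)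

theorem Complex.ofRealPairWith_apply (t : ℂ) (x : ℝ × ℝ) :
    Complex.ofRealPairWith t x = x.1 + x.2 * t := by
  simp [Complex.ofRealPairWith]

theorem Complex.ofRealPairWith_injective {t : ℂ} (ht : t.im ≠ 0) :
    Function.Injective (Complex.ofRealPairWith t) := by
  refine (injective_iff_map_eq_zero _).2 fun x hx => ?_
  rw [Complex.ofRealPairWith_apply] at hx
  obtain ⟨h₁, h₂⟩ := Complex.eq_zero_of_ofReal_add_ofReal_mul_eq_zero ht hx
  exact Prod.ext h₁ h₂

theorem Complex.ofRealPairWith_pmul {a₁ a₂ a₃ b₁ b₂ b₃ : ℝ} {t : ℂ}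
    (h₂ : (a₁ + b₁ * t) * t = a₂ + b₂ * t) (h₃ : (a₁ + b₁ * t) * t ^ 2 = a₃ + b₃ * t)
    (x y : ℝ × ℝ) :
    Complex.ofRealPairWith t (pmul a₁ a₂ a₃ b₁ b₂ b₃ x y) =
      (a₁ + b₁ * t) * (Complex.ofRealPairWith t x * Complex.ofRealPairWith t y) := by
  simp only [Complex.ofRealPairWith_apply, pmul]
  push_cast
  linear_combination (-(x.1 * y.2 + x.2 * y.1 : ℂ)) * h₂ - (x.2 * y.2 : ℂ) * h₃

/-- Classification, case `Δ < 0`: `ℙ_{a,b}` is isomorphic to `ℂ`. -/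
theorem perplex_iso_complex_of_discriminant_neg (a₁ a₂ a₃ b₁ b₂ b₃ : ℝ)
    (hp : IsPerplexParam a₁ a₂ a₃ b₁ b₂ b₃)
    (hΔ : (a₁ * b₃ - a₃ * b₁) ^ 2 -
        4 * (a₁ * b₂ - a₂ * b₁) * (a₂ * b₃ - a₃ * b₂) < 0) :
    ∃ φ : (ℝ × ℝ) ≃ₗ[ℝ] ℂ, ∀ x y : ℝ × ℝ, φ (pmul a₁ a₂ a₃ b₁ b₂ b₃ x y) = φ x * φ y := by
  have hK := hp.assoc_identity
  obtain ⟨-, hA, hiii, hiv⟩ := hp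
  obtain ⟨t, ht, hroot⟩ := Complex.exists_im_ne_zero_quadratic_eq_zero
    (a := a₁ * b₂ - a₂ * b₁) (b := -(a₁ * b₃ - a₃ * b₁)) (c := a₂ * b₃ - a₃ * b₂)
    (by rwa [discrim, neg_sq])
  obtain ⟨h₂, h₃⟩ := mul_root_eq_of_quadratic_eq_zero (a₁ := (a₁ : ℂ)) (a₂ := a₂) (a₃ := a₃)
    (b₁ := b₁) (b₂ := b₂) (b₃ := b₃) (t := t)
    (by exact_mod_cast hA) (by exact_mod_cast hiii) (by exact_mod_cast hiv)
    (by exact_mod_cast hK) (by push_cast at hroot; linear_combination hroot)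
  have hc : (a₁ + b₁ * t : ℂ) ≠ 0 := fun h => hA <| by
    obtain ⟨rfl, rfl⟩ := Complex.eq_zero_of_ofReal_add_ofReal_mul_eq_zero ht h
    ring
  let ψ := (Complex.ofRealPairWith t).linearEquivOfInjective
    (Complex.ofRealPairWith_injective ht) (by simp)
  refine ⟨ψ.trans ((LinearEquiv.smulOfNeZero ℂ ℂ _ hc).restrictScalars ℝ), fun x y => ?_⟩
  simp only [LinearEquiv.trans_apply, LinearEquiv.restrictScalars_apply,
    LinearEquiv.smulOfNeZero_apply, smul_eq_mul, ψ, LinearMap.linearEquivOfInjective_apply,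
    Complex.ofRealPairWith_pmul h₂ h₃]
  ring
end
end

section
/- Let (a,b) be a perplex parameter and suppose Δ > 0, where Δ := (a₁b₃ − a₃b₁)² − 4(a₁b₂ − a₂b₁)(a₂b₃ − a₃b₂). Then ℙ_{a,b} is isomorphic to the split algebra ℝ ⊕ ℝ: there exists a real-linear equivalence φ : ℝ² → ℝ × ℝ such that φ(x * y) = φ(x)·φ(y) (componentwise multiplication) for all x, y ∈ ℝ². -/
open Filter Topology

noncomputable section

/-!
With `k = a₁b₂ - a₂b₁`, conditions (i), (iii), (iv) make `(b₂, -b₁)/k` a unit of `ℙ_{a,b}`,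
and they force the normal form `a = (b₂ - u b₁, v b₁, v b₂)`, `b₃ = v b₁ + u b₂` with
`u = (a₁b₃ - a₃b₁)/k`, `v = -(a₂b₃ - a₃b₂)/k`; then `Δ = k² (u² + 4v)`.
If `λ, μ` are the roots of `t² - ut - v`, then `x ↦ (b₂ - μ b₁)(x₁ + λ x₂)` is multiplicative,
and `(b₂ - μ b₁)(b₂ - λ b₁) = k`. For `Δ > 0` the two real roots give two independent
characters, and together they form an isomorphism onto `ℝ × ℝ`.
-/

theorem IsPerplexParam.b₂_sq_sub_b₁_mul_b₃ {a₁ a₂ a₃ b₁ b₂ b₃ : ℝ}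
    (hp : IsPerplexParam a₁ a₂ a₃ b₁ b₂ b₃) : b₂ ^ 2 - b₁ * b₃ = a₁ * b₂ - a₂ * b₁ := by
  obtain ⟨h₁, -, h₃, h₄⟩ := hp
  rcases eq_or_ne a₂ 0 with rfl | ha₂
  · have ha₃ : a₃ ≠ 0 := fun h ↦ h₁ (by simp [h])
    have hb₁ : b₁ = 0 := by simpa [ha₃] using h₃
    have hb₂ : b₂ = a₁ := by
      have : a₃ * (a₁ - b₂) = 0 := by linear_combination h₄
      linarith [(mul_eq_zero.mp this).resolve_left ha₃]
    subst hb₁ hb₂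
    ring
  · apply mul_left_cancel₀ ha₂
    linear_combination (b₂ - a₁) * h₃ - b₁ * h₄

theorem IsPerplexParam.exists_normalForm {a₁ a₂ a₃ b₁ b₂ b₃ : ℝ}
    (hp : IsPerplexParam a₁ a₂ a₃ b₁ b₂ b₃) :
    ∃ u v : ℝ, a₁ = b₂ - u * b₁ ∧ a₂ = v * b₁ ∧ a₃ = v * b₂ ∧ b₃ = v * b₁ + u * b₂ := by
  have hI := hp.b₂_sq_sub_b₁_mul_b₃
  obtain ⟨-, hk, h₃, h₄⟩ := hp
  set k := a₁ * b₂ - a₂ * b₁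
  refine ⟨(a₁ * b₃ - a₃ * b₁) / k, -(a₂ * b₃ - a₃ * b₂) / k, ?_, ?_, ?_, ?_⟩ <;>
    field_simp
  · linear_combination b₁ * h₃ - a₁ * hI
  · linear_combination b₂ * h₃ - a₂ * hI
  · linear_combination b₂ * h₄ + a₂ * h₃
  · ring

section Characters

variable {K : Type*} [Field K]

theorem LinearMap.prod_smul_fst_add_smul_snd_injective {c c' l l' : K} (hc : c ≠ 0)
    (hc' : c' ≠ 0) (hl : l ≠ l') :
    Function.Injective
      ((c • (fst K K K + l • snd K K K)).prod (c' • (fst K K K + l' • snd K K K))) := by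
  rw [injective_iff_map_eq_zero]
  rintro ⟨x₁, x₂⟩ hx
  obtain ⟨h₁, h₂⟩ : x₁ + l * x₂ = 0 ∧ x₁ + l' * x₂ = 0 := by
    simpa [hc, hc', ← mul_add] using hx
  have hx₂ : x₂ = 0 := by
    have : (l - l') * x₂ = 0 := by linear_combination h₁ - h₂
    exact (mul_eq_zero.mp this).resolve_left (sub_ne_zero.mpr hl)
  simp_all

theorem exists_linearEquiv_prod_mul_of_injective {m : K × K → K × K → K × K}
    (f g : K × K →ₗ[K] K) (hf : ∀ x y, f (m x y) = f x * f y) (hg : ∀ x y, g (m x y) = g x * g y)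
    (hfg : Function.Injective (f.prod g)) :
    ∃ φ : (K × K) ≃ₗ[K] K × K, ∀ x y, φ (m x y) = φ x * φ y :=
  ⟨.ofInjectiveEndo _ hfg, fun x y ↦ by simp [hf, hg]⟩

end Characters

theorem map_pmul_eq_mul_of_vieta (b₁ b₂ u v l l' : ℝ) (hsum : l + l' = u) (hprod : l * l' = -v)
    (x y : ℝ × ℝ) :
    let χ := (b₂ - l' * b₁) • (LinearMap.fst ℝ ℝ ℝ + l • LinearMap.snd ℝ ℝ ℝ)
    χ (pmul (b₂ - u * b₁) (v * b₁) (v * b₂) b₁ b₂ (v * b₁ + u * b₂) x y) = χ x * χ y := by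
  obtain rfl : u = l + l' := hsum.symm
  obtain rfl : v = -(l * l') := by linarith
  simp only [pmul, LinearMap.smul_apply, LinearMap.add_apply, LinearMap.fst_apply,
    LinearMap.snd_apply, smul_eq_mul]
  ring

/-- Classification, case `Δ > 0`: `ℙ_{a,b}` is isomorphic to the split algebra
`ℝ ⊕ ℝ` with componentwise multiplication. -/
theorem perplex_iso_split_of_discriminant_pos (a₁ a₂ a₃ b₁ b₂ b₃ : ℝ)
    (hp : IsPerplexParam a₁ a₂ a₃ b₁ b₂ b₃)
    (hΔ : 0 < (a₁ * b₃ - a₃ * b₁) ^ 2 -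
        4 * (a₁ * b₂ - a₂ * b₁) * (a₂ * b₃ - a₃ * b₂)) :
    ∃ φ : (ℝ × ℝ) ≃ₗ[ℝ] ℝ × ℝ, ∀ x y : ℝ × ℝ, φ (pmul a₁ a₂ a₃ b₁ b₂ b₃ x y) = φ x * φ y := by
  have hk := hp.2.1
  obtain ⟨u, v, rfl, rfl, rfl, rfl⟩ := hp.exists_normalForm
  have hdisc : 0 < u ^ 2 + 4 * v := by
    have hΔ' : 0 < ((b₂ - u * b₁) * b₂ - v * b₁ * b₁) ^ 2 * (u ^ 2 + 4 * v) := by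
      linear_combination hΔ
    exact pos_of_mul_pos_right hΔ' (sq_nonneg _)
  obtain ⟨l, l', hsum, hprod, hl⟩ : ∃ l l' : ℝ, l + l' = u ∧ l * l' = -v ∧ l ≠ l' := by
    refine ⟨(u + √(u ^ 2 + 4 * v)) / 2, (u - √(u ^ 2 + 4 * v)) / 2, by ring, ?_, ?_⟩
    · linear_combination -Real.sq_sqrt hdisc.le / 4
    · linarith [Real.sqrt_pos.mpr hdisc]
  have hk' : (b₂ - l' * b₁) * (b₂ - l * b₁) ≠ 0 := by
    convert hk using 1
    linear_combination -b₁ * b₂ * hsum + b₁ ^ 2 * hprod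
  exact exists_linearEquiv_prod_mul_of_injective _ _
    (map_pmul_eq_mul_of_vieta b₁ b₂ u v l l' hsum hprod)
    (map_pmul_eq_mul_of_vieta b₁ b₂ u v l' l ((add_comm _ _).trans hsum)
      ((mul_comm _ _).trans hprod))
    (LinearMap.prod_smul_fst_add_smul_snd_injective (left_ne_zero_of_mul hk')
      (right_ne_zero_of_mul hk') hl)
end
end

section
/- Let (a,b) be a perplex parameter. For x = (x₁,x₂) ∈ ℝ², define the perplex conjugate x̃ := (1/(a₁b₂ − a₂b₁))·((b₂² + a₂b₁)x₁ + (b₂b₃ + a₃b₁)x₂, −(a₁b₁ + b₁b₂)x₁ − (b₂² + a₂b₁)x₂). Then for every x ∈ ℝ², x * x̃ = N(x)·𝟙, where N(x) := (a₁b₂ − a₂b₁)x₁² + (a₁b₃ − a₃b₁)x₁x₂ − (a₁a₃ − a₂²)x₂² and 𝟙 = (1/(a₁b₂ − a₂b₁))·(b₂, −b₁). -/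
/-! Left multiplication by `x` has matrix `L_x = [[a₁x₁ + a₂x₂, a₂x₁ + a₃x₂], [b₁x₁ + b₂x₂, b₂x₁ + b₃x₂]]`,
and `(a₁b₂ - a₂b₁) • x̃ = adj(L_x) (b₂, -b₁)`. Hence `x * x̃` is `(1/(a₁b₂ - a₂b₁)) • det(L_x) • (b₂, -b₁)`,
and condition (iv) is exactly what makes `det(L_x)` equal to `N(x)`. -/

open Filter Topology

noncomputable section

/-- The perplex norm `N`. -/
def pN (a₁ a₂ a₃ b₁ b₂ b₃ : ℝ) (x : ℝ × ℝ) : ℝ :=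
  (a₁ * b₂ - a₂ * b₁) * x.1 ^ 2 + (a₁ * b₃ - a₃ * b₁) * x.1 * x.2 -
    (a₁ * a₃ - a₂ ^ 2) * x.2 ^ 2

/-- The perplex conjugate `x̃`. -/
noncomputable def pconj (a₁ a₂ a₃ b₁ b₂ b₃ : ℝ) (x : ℝ × ℝ) : ℝ × ℝ :=
  (1 / (a₁ * b₂ - a₂ * b₁)) •
    (((b₂ ^ 2 + a₂ * b₁) * x.1 + (b₂ * b₃ + a₃ * b₁) * x.2,
      -((a₁ * b₁ + b₁ * b₂) * x.1) - (b₂ ^ 2 + a₂ * b₁) * x.2) : ℝ × ℝ)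

theorem pmul_smul_right (a₁ a₂ a₃ b₁ b₂ b₃ r : ℝ) (x y : ℝ × ℝ) :
    pmul a₁ a₂ a₃ b₁ b₂ b₃ x (r • y) = r • pmul a₁ a₂ a₃ b₁ b₂ b₃ x y := by
  simp only [pmul, Prod.smul_fst, Prod.smul_snd, Prod.smul_mk, smul_eq_mul, Prod.mk.injEq]
  constructor <;> ring

def padj (a₁ a₂ a₃ b₁ b₂ b₃ : ℝ) (x : ℝ × ℝ) : ℝ × ℝ :=
  ((b₂ ^ 2 + a₂ * b₁) * x.1 + (b₂ * b₃ + a₃ * b₁) * x.2,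
    -((a₁ * b₁ + b₁ * b₂) * x.1) - (b₂ ^ 2 + a₂ * b₁) * x.2)

theorem pconj_eq_smul_padj (a₁ a₂ a₃ b₁ b₂ b₃ : ℝ) (x : ℝ × ℝ) :
    pconj a₁ a₂ a₃ b₁ b₂ b₃ x = (1 / (a₁ * b₂ - a₂ * b₁)) • padj a₁ a₂ a₃ b₁ b₂ b₃ x :=
  rfl

theorem pmul_padj {a₁ a₂ a₃ b₁ b₂ b₃ : ℝ} (h : a₁ * a₃ - a₂ ^ 2 + a₂ * b₃ - a₃ * b₂ = 0)
    (x : ℝ × ℝ) :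
    pmul a₁ a₂ a₃ b₁ b₂ b₃ x (padj a₁ a₂ a₃ b₁ b₂ b₃ x) = pN a₁ a₂ a₃ b₁ b₂ b₃ x • (b₂, -b₁) := by
  simp only [pmul, padj, pN, Prod.smul_mk, smul_eq_mul, Prod.mk.injEq]
  constructor
  · linear_combination b₂ * x.2 ^ 2 * h
  · linear_combination -b₁ * x.2 ^ 2 * h

/-- For every `x`, `x * x̃ = N(x)·𝟙`. -/
theorem pmul_pconj (a₁ a₂ a₃ b₁ b₂ b₃ : ℝ)
    (hp : IsPerplexParam a₁ a₂ a₃ b₁ b₂ b₃) (x : ℝ × ℝ) :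
    pmul a₁ a₂ a₃ b₁ b₂ b₃ x (pconj a₁ a₂ a₃ b₁ b₂ b₃ x) = pN a₁ a₂ a₃ b₁ b₂ b₃ x • pone a₁ a₂ b₁ b₂ := by
  rw [pconj_eq_smul_padj, pmul_smul_right, pmul_padj hp.2.2.2, pone, smul_comm]
end
end

section
/- Let (a,b) be a perplex parameter and let (uₙ) be a sequence of invertible elements of ℙ_{a,b} with uₙ → 0, which is positively separated from the zero-divisor directions: there exists c > 0 such that |N(uₙ/‖uₙ‖)| ≥ c for all n, where ‖·‖ is the Euclidean norm. Then there exists M > 0 such that ‖uₙ⁻¹‖ ≤ M/‖uₙ‖ for all n, where uₙ⁻¹ denotes the *-inverse of uₙ. -/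
open Filter Topology

noncomputable section

/-- The Euclidean norm on `ℝ²`. -/
noncomputable def enorm2 (x : ℝ × ℝ) : ℝ := Real.sqrt (x.1 ^ 2 + x.2 ^ 2)

set_option maxHeartbeats 4000000

/-- Proposition 1.9: for a sequence of units `uₙ → 0` positively separated from
the zero-divisor directions, `‖uₙ⁻¹‖ ≤ M/‖uₙ‖` for some `M > 0`. -/
theorem inverse_norm_bound (a₁ a₂ a₃ b₁ b₂ b₃ : ℝ)
    (hp : IsPerplexParam a₁ a₂ a₃ b₁ b₂ b₃)
    (u v : ℕ → ℝ × ℝ)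
    (hinv : ∀ n, pmul a₁ a₂ a₃ b₁ b₂ b₃ (u n) (v n) = pone a₁ a₂ b₁ b₂)
    (hu0 : Tendsto u atTop (nhds 0))
    (hsep : ∃ c > 0, ∀ n, c ≤ |pN a₁ a₂ a₃ b₁ b₂ b₃ ((enorm2 (u n))⁻¹ • u n)|) :
    ∃ M > 0, ∀ n, enorm2 (v n) ≤ M / enorm2 (u n) := by
  obtain ⟨h1, hδ, h3, h4⟩ := hp
  obtain ⟨c, hc, hsep⟩ := hsep
  set δ : ℝ := a₁ * b₂ - a₂ * b₁ with hδdef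
  have hδa : (0:ℝ) < |δ| := abs_pos.mpr hδ
  set K : ℝ := |a₁| + |a₂| + |a₃| + |b₁| + |b₂| + |b₃| + 1 with hKdef
  have hK1 : (1:ℝ) ≤ K := by
    have := abs_nonneg a₁; have := abs_nonneg a₂; have := abs_nonneg a₃
    have := abs_nonneg b₁; have := abs_nonneg b₂; have := abs_nonneg b₃
    simp only [hKdef]; linarith
  refine ⟨(2 * (2 * K ^ 2) + 1) / (|δ| * c), div_pos (by positivity) (mul_pos hδa hc), fun n => ?_⟩
  set x : ℝ := (u n).1 with hxdef
  set y : ℝ := (u n).2 with hydef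
  set p : ℝ := (v n).1 with hpdef
  set q : ℝ := (v n).2 with hqdef
  set r : ℝ := enorm2 (u n) with hrdef
  have hr0 : 0 ≤ r := Real.sqrt_nonneg _
  have hr2 : r ^ 2 = x ^ 2 + y ^ 2 := by
    rw [hrdef]; simp only [enorm2]; exact Real.sq_sqrt (by positivity)
  -- separation gives lower bound on |pN (u n)| and positivity of r
  have hsn := hsep n
  have hNsmul : pN a₁ a₂ a₃ b₁ b₂ b₃ ((enorm2 (u n))⁻¹ • u n)
      = (r⁻¹) ^ 2 * pN a₁ a₂ a₃ b₁ b₂ b₃ (u n) := by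
    simp only [pN, Prod.smul_fst, Prod.smul_snd, smul_eq_mul, ← hrdef, ← hxdef, ← hydef]
    ring
  rw [hNsmul, abs_mul, abs_pow, abs_inv, abs_of_nonneg hr0] at hsn
  set N : ℝ := |pN a₁ a₂ a₃ b₁ b₂ b₃ (u n)| with hNdef
  have hN0 : 0 ≤ N := abs_nonneg _
  have hrpos : 0 < r := by
    rcases hr0.lt_or_eq with h | h
    · exact h
    · exfalso; rw [← h] at hsn; simp at hsn; linarith
  have hNlow : c * r ^ 2 ≤ N := by
    have h := mul_le_mul_of_nonneg_right hsn (sq_nonneg r)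
    calc c * r ^ 2 ≤ (r⁻¹) ^ 2 * N * r ^ 2 := h
      _ = N := by field_simp
  -- Cramer identities
  have hAB := hinv n
  simp only [pmul, pone, Prod.smul_mk, smul_eq_mul, Prod.mk.injEq, ← hδdef,
    ← hxdef, ← hydef, ← hpdef, ← hqdef] at hAB
  obtain ⟨hA, hB⟩ := hAB
  have hA2 : δ * (a₁ * x * p + a₂ * (x * q + y * p) + a₃ * y * q) = b₂ := by
    rw [hA]; field_simp
  have hB2 : δ * (b₁ * x * p + b₂ * (x * q + y * p) + b₃ * y * q) = -b₁ := by
    rw [hB]; field_simp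
  have hv1 : δ * pN a₁ a₂ a₃ b₁ b₂ b₃ (u n) * p
      = (b₂ * x + b₃ * y) * b₂ + (a₂ * x + a₃ * y) * b₁ := by
    simp only [pN, ← hxdef, ← hydef, ← hδdef]
    linear_combination (b₂ * x + b₃ * y) * hA2 - (a₂ * x + a₃ * y) * hB2
      - δ * y ^ 2 * p * h4
  have hv2 : δ * pN a₁ a₂ a₃ b₁ b₂ b₃ (u n) * q
      = -((b₁ * x + b₂ * y) * b₂) - (a₁ * x + a₂ * y) * b₁ := by
    simp only [pN, ← hxdef, ← hydef, ← hδdef]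
    linear_combination (-(b₁ * x + b₂ * y)) * hA2 + (a₁ * x + a₂ * y) * hB2
      - δ * y ^ 2 * q * h4
  -- coordinate bounds
  have hx : |x| ≤ r := by
    rw [← Real.sqrt_sq_eq_abs, hrdef]; simp only [enorm2, ← hxdef, ← hydef]
    exact Real.sqrt_le_sqrt (by nlinarith [sq_nonneg y])
  have hy : |y| ≤ r := by
    rw [← Real.sqrt_sq_eq_abs, hrdef]; simp only [enorm2, ← hxdef, ← hydef]
    exact Real.sqrt_le_sqrt (by nlinarith [sq_nonneg x])
  have habs : ∀ c1 c2 : ℝ, |c1 * x + c2 * y| ≤ (|c1| + |c2|) * r := by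
    intro c1 c2
    calc |c1 * x + c2 * y| ≤ |c1 * x| + |c2 * y| := abs_add_le _ _
      _ = |c1| * |x| + |c2| * |y| := by rw [abs_mul, abs_mul]
      _ ≤ (|c1| + |c2|) * r := by
          nlinarith [abs_nonneg c1, abs_nonneg c2, abs_nonneg x, abs_nonneg y]
  have hnum1 : |(b₂ * x + b₃ * y) * b₂ + (a₂ * x + a₃ * y) * b₁| ≤ (2 * K ^ 2) * r := by
    calc |(b₂ * x + b₃ * y) * b₂ + (a₂ * x + a₃ * y) * b₁|
        ≤ |b₂ * x + b₃ * y| * |b₂| + |a₂ * x + a₃ * y| * |b₁| := by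
          calc _ ≤ |(b₂ * x + b₃ * y) * b₂| + |(a₂ * x + a₃ * y) * b₁| := abs_add_le _ _
            _ = _ := by rw [abs_mul, abs_mul]
      _ ≤ ((|b₂| + |b₃|) * |b₂| + (|a₂| + |a₃|) * |b₁|) * r := by
          have e1 := mul_le_mul_of_nonneg_right (habs b₂ b₃) (abs_nonneg b₂)
          have e2 := mul_le_mul_of_nonneg_right (habs a₂ a₃) (abs_nonneg b₁)
          ring_nf
          ring_nf at e1 e2
          linarith [e1, e2]
      _ ≤ (2 * K ^ 2) * r := by
          refine mul_le_mul_of_nonneg_right ?_ hr0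
          have hK0 : (0:ℝ) ≤ K := by linarith
          have e3 : |b₂| ≤ K := by
            simp only [hKdef]
            linarith [abs_nonneg a₁, abs_nonneg a₂, abs_nonneg a₃, abs_nonneg b₁,
              abs_nonneg b₃]
          have e4 : |b₁| ≤ K := by
            simp only [hKdef]
            linarith [abs_nonneg a₁, abs_nonneg a₂, abs_nonneg a₃, abs_nonneg b₂,
              abs_nonneg b₃]
          have hsum1 : |b₂| + |b₃| ≤ K := by
            simp only [hKdef]
            linarith [abs_nonneg a₁, abs_nonneg a₂, abs_nonneg a₃, abs_nonneg b₁]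
          have hsum2 : |a₂| + |a₃| ≤ K := by
            simp only [hKdef]
            linarith [abs_nonneg a₁, abs_nonneg b₁, abs_nonneg b₂, abs_nonneg b₃]
          have e5 : (|b₂| + |b₃|) * |b₂| ≤ K ^ 2 := by
            calc (|b₂| + |b₃|) * |b₂| ≤ K * K :=
                  mul_le_mul hsum1 e3 (abs_nonneg b₂) hK0
              _ = K ^ 2 := by ring
          have e6 : (|a₂| + |a₃|) * |b₁| ≤ K ^ 2 := by
            calc (|a₂| + |a₃|) * |b₁| ≤ K * K :=
                  mul_le_mul hsum2 e4 (abs_nonneg b₁) hK0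
              _ = K ^ 2 := by ring
          linarith [e5, e6]
  have hnum2 : |-((b₁ * x + b₂ * y) * b₂) - (a₁ * x + a₂ * y) * b₁| ≤ (2 * K ^ 2) * r := by
    calc |-((b₁ * x + b₂ * y) * b₂) - (a₁ * x + a₂ * y) * b₁|
        ≤ |b₁ * x + b₂ * y| * |b₂| + |a₁ * x + a₂ * y| * |b₁| := by
          calc |-((b₁ * x + b₂ * y) * b₂) - (a₁ * x + a₂ * y) * b₁|
              ≤ |(b₁ * x + b₂ * y) * b₂| + |(a₁ * x + a₂ * y) * b₁| := by
                rw [sub_eq_add_neg]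
                refine (abs_add_le _ _).trans ?_
                rw [abs_neg, abs_neg]
            _ = _ := by rw [abs_mul, abs_mul]
      _ ≤ ((|b₁| + |b₂|) * |b₂| + (|a₁| + |a₂|) * |b₁|) * r := by
          have e1 := mul_le_mul_of_nonneg_right (habs b₁ b₂) (abs_nonneg b₂)
          have e2 := mul_le_mul_of_nonneg_right (habs a₁ a₂) (abs_nonneg b₁)
          ring_nf
          ring_nf at e1 e2
          linarith [e1, e2]
      _ ≤ (2 * K ^ 2) * r := by
          refine mul_le_mul_of_nonneg_right ?_ hr0
          have hK0 : (0:ℝ) ≤ K := by linarith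
          have e3 : |b₂| ≤ K := by
            simp only [hKdef]
            linarith [abs_nonneg a₁, abs_nonneg a₂, abs_nonneg a₃, abs_nonneg b₁,
              abs_nonneg b₃]
          have e4 : |b₁| ≤ K := by
            simp only [hKdef]
            linarith [abs_nonneg a₁, abs_nonneg a₂, abs_nonneg a₃, abs_nonneg b₂,
              abs_nonneg b₃]
          have hsum1 : |b₁| + |b₂| ≤ K := by
            simp only [hKdef]
            linarith [abs_nonneg a₁, abs_nonneg a₂, abs_nonneg a₃, abs_nonneg b₃]
          have hsum2 : |a₁| + |a₂| ≤ K := by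
            simp only [hKdef]
            linarith [abs_nonneg a₃, abs_nonneg b₁, abs_nonneg b₂, abs_nonneg b₃]
          have e5 : (|b₁| + |b₂|) * |b₂| ≤ K ^ 2 := by
            calc (|b₁| + |b₂|) * |b₂| ≤ K * K :=
                  mul_le_mul hsum1 e3 (abs_nonneg b₂) hK0
              _ = K ^ 2 := by ring
          have e6 : (|a₁| + |a₂|) * |b₁| ≤ K ^ 2 := by
            calc (|a₁| + |a₂|) * |b₁| ≤ K * K :=
                  mul_le_mul hsum2 e4 (abs_nonneg b₁) hK0
              _ = K ^ 2 := by ring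
          linarith [e5, e6]
  -- bound |p| * r and |q| * r
  have habs1 : |δ| * N * |p| ≤ (2 * K ^ 2) * r := by
    calc |δ| * N * |p| = |δ * pN a₁ a₂ a₃ b₁ b₂ b₃ (u n) * p| := by
          rw [abs_mul, abs_mul, hNdef]
      _ ≤ (2 * K ^ 2) * r := by rw [hv1]; exact hnum1
  have habs2 : |δ| * N * |q| ≤ (2 * K ^ 2) * r := by
    calc |δ| * N * |q| = |δ * pN a₁ a₂ a₃ b₁ b₂ b₃ (u n) * q| := by
          rw [abs_mul, abs_mul, hNdef]
      _ ≤ (2 * K ^ 2) * r := by rw [hv2]; exact hnum2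
  have hp2 : |δ| * c * (r * |p|) ≤ (2 * K ^ 2) := by
    have h1 : |δ| * c * (r * |p|) * r ≤ (2 * K ^ 2) * r := by
      have he : |δ| * c * (r * |p|) * r = (|δ| * |p|) * (c * r ^ 2) := by ring
      rw [he]
      calc (|δ| * |p|) * (c * r ^ 2) ≤ (|δ| * |p|) * N :=
            mul_le_mul_of_nonneg_left hNlow (by positivity)
        _ = |δ| * N * |p| := by ring
        _ ≤ (2 * K ^ 2) * r := habs1
    exact le_of_mul_le_mul_right h1 hrpos
  have hq2 : |δ| * c * (r * |q|) ≤ (2 * K ^ 2) := by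
    have h1 : |δ| * c * (r * |q|) * r ≤ (2 * K ^ 2) * r := by
      have he : |δ| * c * (r * |q|) * r = (|δ| * |q|) * (c * r ^ 2) := by ring
      rw [he]
      calc (|δ| * |q|) * (c * r ^ 2) ≤ (|δ| * |q|) * N :=
            mul_le_mul_of_nonneg_left hNlow (by positivity)
        _ = |δ| * N * |q| := by ring
        _ ≤ (2 * K ^ 2) * r := habs2
    exact le_of_mul_le_mul_right h1 hrpos
  -- finish
  have hvle : enorm2 (v n) ≤ |p| + |q| := by
    simp only [enorm2, ← hpdef, ← hqdef]
    have h := Real.sqrt_le_sqrt (show p ^ 2 + q ^ 2 ≤ (|p| + |q|) ^ 2 by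
      nlinarith [abs_nonneg p, abs_nonneg q, sq_abs p, sq_abs q])
    rwa [Real.sqrt_sq (by positivity)] at h
  rw [le_div_iff₀ hrpos]
  rw [le_div_iff₀ (mul_pos hδa hc)]
  calc enorm2 (v n) * r * (|δ| * c) ≤ (|p| + |q|) * r * (|δ| * c) := by
        have h := mul_le_mul_of_nonneg_right hvle hr0
        exact mul_le_mul_of_nonneg_right h (le_of_lt (mul_pos hδa hc))
    _ ≤ 2 * (2 * K ^ 2) + 1 := by
        have h1 : (|p| + |q|) * r * (|δ| * c) = |δ| * c * (r * |p|) + |δ| * c * (r * |q|) := by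
          ring
        rw [h1]; linarith [hp2, hq2]
end
end

section
/- For every real linear map L : ℝ² → ℝ² there exist a sequence of perplex parameters (aⁿ, bⁿ) and a sequence of real linear maps Lₙ = (uₙ, vₙ) : ℝ² → ℝ² such that Lₙ → L (convergence of the matrix entries) and each Lₙ satisfies the generalized Cauchy–Riemann equation for (aⁿ, bⁿ): with the product *ₙ defined by (aⁿ, bⁿ), (0,1) *ₙ (∂uₙ/∂x₁, ∂vₙ/∂x₁) = (1,0) *ₙ (∂uₙ/∂x₂, ∂vₙ/∂x₂) at every point. -/
/-!
With `a₁ = a₂ = 1` the conditions on a perplex parameter leave `a₃` and `b₁` free, and the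
generalized Cauchy–Riemann equation for a linear map with columns `(p, q)` and `(r, s)` is solved
by `a₃ = (r + s - p) / q` and `b₁ = q / r`; this choice is a perplex parameter exactly when
`q`, `r` and `r + s - p - q` are nonzero. Perturbing `L` to `L + t • E` with `E (x, y) = (2y, x)`
moves these three quantities to `q + t`, `r + 2t` and `r + s - p - q + t`, so all but finitely
many `t` work, and such `t` accumulate at `0`.
-/

open Filter Topology

noncomputable section

theorem exists_isPerplexParam_pmul_eq (x y : ℝ × ℝ) (hx : x.2 ≠ 0) (hy : y.1 ≠ 0)
    (hxy : y.1 + y.2 - x.1 - x.2 ≠ 0) :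
    ∃ a₁ a₂ a₃ b₁ b₂ b₃ : ℝ, IsPerplexParam a₁ a₂ a₃ b₁ b₂ b₃ ∧
      pmul a₁ a₂ a₃ b₁ b₂ b₃ (0, 1) x = pmul a₁ a₂ a₃ b₁ b₂ b₃ (1, 0) y := by
  set c := (y.1 + y.2 - x.1) / x.2
  set b := x.2 / y.1
  have hc : c - 1 ≠ 0 := by
    rw [div_sub_one hx]
    exact div_ne_zero hxy hx
  have hb : b ≠ 0 := div_ne_zero hx hy
  refine ⟨1, 1, c, b, c * b, c ^ 2 * b - (c - 1), ⟨?_, ?_, by ring, by ring⟩, ?_⟩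
  · simpa using hc
  · simpa [sub_one_mul] using mul_ne_zero hc hb
  · simp only [pmul, c, b, Prod.mk.injEq]
    constructor <;> field_simp <;> ring

theorem Set.Countable.exists_seq_notMem_tendsto {s : Set ℝ} (hs : s.Countable) (x : ℝ) :
    ∃ u : ℕ → ℝ, (∀ n, u n ∉ s) ∧ Tendsto u atTop (𝓝 x) :=
  mem_closure_iff_seq_limit.1 ((hs.dense_compl ℝ).closure_eq ▸ Set.mem_univ x)

def perturbation : (ℝ × ℝ) →ₗ[ℝ] ℝ × ℝ :=
  (2 • LinearMap.snd ℝ ℝ ℝ).prod (LinearMap.fst ℝ ℝ ℝ)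

theorem tendsto_add_smul_apply {E F : Type*} [AddCommGroup E] [Module ℝ E]
    [NormedAddCommGroup F] [NormedSpace ℝ F] (L M : E →ₗ[ℝ] F) {t : ℕ → ℝ}
    (ht : Tendsto t atTop (𝓝 0)) (v : E) :
    Tendsto (fun n => (L + t n • M) v) atTop (𝓝 (L v)) := by
  simpa using tendsto_const_nhds.add (ht.smul_const (M v))

/-- Theorem 3.4 (ii): every real linear map `L : ℝ² → ℝ²` is the limit of linear
maps `Lₙ` satisfying the generalized Cauchy–Riemann equation for suitable perplex
parameters `(aⁿ, bⁿ)`. -/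
theorem linear_approx_by_perplex (L : (ℝ × ℝ) →ₗ[ℝ] ℝ × ℝ) :
    ∃ (a₁ a₂ a₃ b₁ b₂ b₃ : ℕ → ℝ) (Ln : ℕ → (ℝ × ℝ) →ₗ[ℝ] ℝ × ℝ),
      (∀ n, IsPerplexParam (a₁ n) (a₂ n) (a₃ n) (b₁ n) (b₂ n) (b₃ n)) ∧
      (∀ v : ℝ × ℝ, Tendsto (fun n => Ln n v) atTop (nhds (L v))) ∧
      ∀ n,
        pmul (a₁ n) (a₂ n) (a₃ n) (b₁ n) (b₂ n) (b₃ n) ((0, 1) : ℝ × ℝ)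
            (Ln n ((1, 0) : ℝ × ℝ)) =
          pmul (a₁ n) (a₂ n) (a₃ n) (b₁ n) (b₂ n) (b₃ n) ((1, 0) : ℝ × ℝ)
            (Ln n ((0, 1) : ℝ × ℝ)) := by
  set x := L (1, 0)
  set y := L (0, 1)
  obtain ⟨t, ht_good, ht_lim⟩ :=
    (Set.toFinite {-x.2, -y.1 / 2, x.1 + x.2 - y.1 - y.2}).countable.exists_seq_notMem_tendsto 0
  have hsolve : ∀ n, ∃ a₁ a₂ a₃ b₁ b₂ b₃ : ℝ, IsPerplexParam a₁ a₂ a₃ b₁ b₂ b₃ ∧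
      pmul a₁ a₂ a₃ b₁ b₂ b₃ (0, 1) ((L + t n • perturbation) (1, 0)) =
        pmul a₁ a₂ a₃ b₁ b₂ b₃ (1, 0) ((L + t n • perturbation) (0, 1)) := by
    intro n
    have hcol₁ : (L + t n • perturbation) (1, 0) = (x.1, x.2 + t n) := by
      simp [perturbation, x, Prod.ext_iff]
    have hcol₂ : (L + t n • perturbation) (0, 1) = (y.1 + 2 * t n, y.2) := by
      simp [perturbation, y, Prod.ext_iff, mul_comm]
    obtain ⟨hq, hr, hqr⟩ : t n ≠ -x.2 ∧ t n ≠ -y.1 / 2 ∧ t n ≠ x.1 + x.2 - y.1 - y.2 := by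
      simpa only [Set.mem_insert_iff, Set.mem_singleton_iff, not_or] using ht_good n
    rw [hcol₁, hcol₂]
    apply exists_isPerplexParam_pmul_eq
    · contrapose! hq; linarith
    · contrapose! hr; linarith
    · contrapose! hqr; dsimp only at hqr; linarith
  choose a₁ a₂ a₃ b₁ b₂ b₃ hparam hcr using hsolve
  exact ⟨a₁, a₂, a₃, b₁, b₂, b₃, fun n => L + t n • perturbation, hparam,
    tendsto_add_smul_apply L perturbation ht_lim, hcr⟩
end
end
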